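/- Let M be a model category, let p ≥ 1, q ≥ 0 and 1 ≤ i ≤ p. Let F, G : Mᵖ ⥤ M and F′, G′ : M^q ⥤ M be functors, each cofibrant in the following sense: for all cofibrations g_j between cofibrant objects of M and every subset S of the index set such that g_j is a trivial cofibration for every j ∈ S, the induced cube (2ᵖ ⥤ M, resp. 2^q ⥤ M) has all latching maps cofibrations in M, and trivial cofibrations at every vertex x with x_j = true for some j ∈ S. Let τ : F → G and τ′ : F′ → G′ be natural transformations such that τ(X₁,…,X_p) and τ′(X′₁,…,X′_q) are weak equivalences in M for all tuples of cofibrant objects. Then for all cofibrant objects X₁,…,X_{p+q−1} of M, the composite morphism F(X₁,…,X_{i−1}, F′(X_i,…,X_{i+q−1}), X_{i+q},…,X_{p+q−1}) → G(X₁,…,X_{i−1}, G′(X_i,…,X_{i+q−1}), X_{i+q},…,X_{p+q−1}), obtained by inserting τ′ into the i-th slot of τ, is a weak equivalence in M. -/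

import Mathlib

open CategoryTheory CategoryTheory.Limits

universe v u

/-- `f` is a retract of `g` in the arrow category. -/
def IsRetract {C : Type u} [Category.{v} C] {X Y X' Y' : C} (f : X ⟶ Y) (g : X' ⟶ Y') : Prop :=
  ∃ (i : X ⟶ X') (r : X' ⟶ X) (i' : Y ⟶ Y') (r' : Y' ⟶ Y),
    i ≫ r = 𝟙 X ∧ i' ≫ r' = 𝟙 Y ∧ i ≫ g = f ≫ i' ∧ g ≫ r' = r ≫ f

/-- A model structure on a category: three classes of morphisms (weak equivalences,
cofibrations, fibrations) satisfying Quillen's axioms (two-out-of-three, closure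
under retracts, lifting, and factorization). -/
structure ModelStructure (C : Type u) [Category.{v} C] where
  W : MorphismProperty C
  Cof : MorphismProperty C
  Fib : MorphismProperty C
  w_comp : ∀ {X Y Z : C} (f : X ⟶ Y) (g : Y ⟶ Z), W f → W g → W (f ≫ g)
  w_cancel_left : ∀ {X Y Z : C} (f : X ⟶ Y) (g : Y ⟶ Z), W f → W (f ≫ g) → W g
  w_cancel_right : ∀ {X Y Z : C} (f : X ⟶ Y) (g : Y ⟶ Z), W g → W (f ≫ g) → W f
  w_retract : ∀ {X Y X' Y' : C} (f : X ⟶ Y) (g : X' ⟶ Y'), IsRetract f g → W g → W f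
  cof_retract : ∀ {X Y X' Y' : C} (f : X ⟶ Y) (g : X' ⟶ Y'), IsRetract f g → Cof g → Cof f
  fib_retract : ∀ {X Y X' Y' : C} (f : X ⟶ Y) (g : X' ⟶ Y'), IsRetract f g → Fib g → Fib f
  lift_cof_trivFib : ∀ {A B X Y : C} (i : A ⟶ B) (p : X ⟶ Y),
    Cof i → Fib p → W p → HasLiftingProperty i p
  lift_trivCof_fib : ∀ {A B X Y : C} (i : A ⟶ B) (p : X ⟶ Y),
    Cof i → W i → Fib p → HasLiftingProperty i p
  factor_cof_trivFib : ∀ {X Y : C} (f : X ⟶ Y), ∃ (Z : C) (g : X ⟶ Z) (h : Z ⟶ Y),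
    Cof g ∧ Fib h ∧ W h ∧ g ≫ h = f
  factor_trivCof_fib : ∀ {X Y : C} (f : X ⟶ Y), ∃ (Z : C) (g : X ⟶ Z) (h : Z ⟶ Y),
    Cof g ∧ W g ∧ Fib h ∧ g ≫ h = f

variable {M : Type u} [Category.{v} M]

/-- An object is cofibrant if the map from the initial object is a cofibration. -/
def ModelStructure.Cofibrant [HasInitial M] (m : ModelStructure M) (X : M) : Prop :=
  m.Cof (initial.to X)

section Latching

variable {P : Type} [Preorder P] [HasColimitsOfSize.{0, 0} M]

/-- The latching object of `F : P ⥤ M` at `x`: the colimit of `F` over the full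
subcategory of all `y < x`. -/
noncomputable def latchingObj (F : P ⥤ M) (x : P) : M :=
  colimit (ObjectProperty.ι (fun y : P => y < x) ⋙ F)

/-- The canonical (latching) map `L_x F ⟶ F x`. -/
noncomputable def latchingMap (F : P ⥤ M) (x : P) : latchingObj F x ⟶ F.obj x :=
  colimit.desc (ObjectProperty.ι (fun y : P => y < x) ⋙ F)
    { pt := F.obj x
      ι :=
        { app := fun y => F.map (homOfLE y.property.le)
          naturality := by
            intro a b f
            dsimp
            rw [Category.comp_id, ← F.map_comp]
            rfl } }

/-- The map induced by a natural transformation on latching objects. -/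
noncomputable def latchingObjHom {F G : P ⥤ M} (τ : F ⟶ G) (x : P) :
    latchingObj F x ⟶ latchingObj G x :=
  colimMap (Functor.whiskerLeft (ObjectProperty.ι (fun y : P => y < x)) τ)

lemma latching_square {F G : P ⥤ M} (τ : F ⟶ G) (x : P) :
    latchingMap F x ≫ τ.app x = latchingObjHom τ x ≫ latchingMap G x := by
  apply colimit.hom_ext
  intro y
  erw [colimit.ι_desc_assoc, latchingObjHom, ι_colimMap_assoc, latchingMap, colimit.ι_desc]
  simp

/-- The relative latching map of `τ : F ⟶ G` at `x`:
the induced map `(L_x G) ⊔_{L_x F} F x ⟶ G x`. -/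
noncomputable def relLatchingMap {F G : P ⥤ M} (τ : F ⟶ G) (x : P) :
    pushout (latchingMap F x) (latchingObjHom τ x) ⟶ G.obj x :=
  pushout.desc (τ.app x) (latchingMap G x) (latching_square τ x)

end Latching

attribute [local instance 2000] Preorder.smallCategory

section Cube

variable {N : Type u} [Category.{v} N] {ι : Type}
variable {Y Z : ι → N} (g : ∀ i, Y i ⟶ Z i)

/-- The edge of the cube in direction `i` between `a ≤ b` in `Bool`. -/
def cubeEdge {i : ι} : ∀ (a b : Bool), a ≤ b → ((cond a (Z i) (Y i)) ⟶ (cond b (Z i) (Y i)))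
  | false, false, _ => 𝟙 _
  | false, true, _ => g i
  | true, true, _ => 𝟙 _
  | true, false, h => absurd h (by decide)

lemma cubeEdge_self {i : ι} (a : Bool) (h : a ≤ a) :
    cubeEdge (i := i) g a a h = 𝟙 (cond a (Z i) (Y i)) := by
  cases a <;> rfl

lemma cubeEdge_comp {i : ι} (a b c : Bool) (hab : a ≤ b) (hbc : b ≤ c) (hac : a ≤ c) :
    cubeEdge (i := i) g a c hac = cubeEdge g a b hab ≫ cubeEdge g b c hbc := by
  cases a <;> cases b <;> cases c <;>
    first
      | exact absurd hab (by decide)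
      | exact absurd hbc (by decide)
      | simp [cubeEdge]

/-- The cube `2^ι ⥤ Nⁱ` induced by the family of morphisms `g i : Y i ⟶ Z i`:
the vertex `x` is sent to the tuple whose `i`-th entry is `Y i` if `x i = false`
and `Z i` if `x i = true`. -/
noncomputable def cube : (ι → Bool) ⥤ (ι → N) where
  obj x := fun i => cond (x i) (Z i) (Y i)
  map {x y} h := fun i => cubeEdge g (x i) (y i) (leOfHom h i)
  map_id x := by
    funext i
    exact cubeEdge_self g (x i) le_rfl
  map_comp {x y z} h h' := by
    funext i
    exact cubeEdge_comp g (x i) (y i) (z i) (leOfHom h i) (leOfHom h' i) _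

end Cube

section CofibrantFunctor

variable {N : Type u} [Category.{v} N] [HasColimitsOfSize.{0, 0} M]

/-- A functor `F : Nⁱ ⥤ M` is cofibrant if for every family of cofibrations
`g i : Y i ⟶ Z i` between cofibrant objects of `N` and every subset `S` of the
index set such that `g i` is a trivial cofibration for all `i ∈ S`, all latching
maps of the induced cube `cube g ⋙ F : 2^ι ⥤ M` are cofibrations in `M`, and are
trivial cofibrations at every vertex `x` with `x i = true` for some `i ∈ S`. -/
def IsCofibrantFunctor [HasInitial N] (mN : ModelStructure N) (mM : ModelStructure M)
    {ι : Type} (F : (ι → N) ⥤ M) : Prop :=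
  ∀ (Y Z : ι → N) (g : ∀ i, Y i ⟶ Z i),
    (∀ i, mN.Cofibrant (Y i)) → (∀ i, mN.Cof (g i)) →
    ∀ S : Set ι, (∀ i ∈ S, mN.W (g i)) →
      (∀ x : ι → Bool, mM.Cof (latchingMap (cube g ⋙ F) x)) ∧
      (∀ x : ι → Bool, (∃ i ∈ S, x i = true) →
        mM.Cof (latchingMap (cube g ⋙ F) x) ∧ mM.W (latchingMap (cube g ⋙ F) x))

end CofibrantFunctor

section Fill

variable {p q : ℕ}

/-- The tuple obtained by putting `A` in slot `i` and `W` elsewhere. -/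
def fillObj (i : Fin p) (W : {j : Fin p // j ≠ i} → M) (A : M) : Fin p → M :=
  fun j => if h : j = i then A else W ⟨j, h⟩

/-- The morphism of tuples which is `φ` in slot `i` and the identity elsewhere. -/
def fillHom (i : Fin p) (W : {j : Fin p // j ≠ i} → M) {A B : M} (φ : A ⟶ B) :
    fillObj i W A ⟶ fillObj i W B := fun j =>
  if h : j = i then
    eqToHom (by simp [fillObj, h]) ≫ φ ≫ eqToHom (by simp [fillObj, h])
  else
    eqToHom (by simp [fillObj, h])

end Fill

/-!
The composite is `F(…, τ', …)` followed by `τ` at a tuple of cofibrant objects; cofibrant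
functors preserve cofibrant objects because the latching object at the bottom vertex of a cube
is initial. It remains to see that `F`, varied in the `i`-th slot only, sends weak equivalences
between cofibrant objects to weak equivalences. For a trivial cofibration `j`, the map
`F(…, j, …)` is the edge of its cube from `⊥` to the atom `update ⊥ i true` followed by an
isomorphism, and that edge is, up to isomorphism, the latching map at the atom: a trivial
cofibration by cofibrancy of `F`. Ken Brown's lemma extends this to all weak equivalences
between cofibrant objects.
-/

namespace ModelStructure

variable (m : ModelStructure M)

lemma isRetract_id_of_comp_eq_id {X Z : M} {g : X ⟶ Z} {h : Z ⟶ X} (hgh : g ≫ h = 𝟙 X) :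
    IsRetract (𝟙 X) g :=
  ⟨𝟙 X, 𝟙 X, g, h, by simp, hgh, by simp, by simp [hgh]⟩

lemma isRetract_id_of_isIso {X Y : M} (f : X ⟶ Y) [IsIso f] : IsRetract f (𝟙 Y) :=
  ⟨f, inv f, 𝟙 Y, 𝟙 Y, by simp, by simp, by simp, by simp⟩

lemma w_id (X : M) : m.W (𝟙 X) := by
  obtain ⟨_, g, _, _, hg, _, hgh⟩ := m.factor_trivCof_fib (𝟙 X)
  exact m.w_retract _ _ (isRetract_id_of_comp_eq_id hgh) hg

lemma cof_id (X : M) : m.Cof (𝟙 X) := by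
  obtain ⟨_, g, _, hg, _, _, hgh⟩ := m.factor_cof_trivFib (𝟙 X)
  exact m.cof_retract _ _ (isRetract_id_of_comp_eq_id hgh) hg

lemma w_of_isIso {X Y : M} (f : X ⟶ Y) [IsIso f] : m.W f :=
  m.w_retract _ _ (isRetract_id_of_isIso f) (m.w_id Y)

lemma cof_of_isIso {X Y : M} (f : X ⟶ Y) [IsIso f] : m.Cof f :=
  m.cof_retract _ _ (isRetract_id_of_isIso f) (m.cof_id Y)

lemma cof_of_hasLiftingProperty {X Y : M} (f : X ⟶ Y)
    (h : ∀ ⦃P Q : M⦄ (p : P ⟶ Q), m.Fib p → m.W p → HasLiftingProperty f p) :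
    m.Cof f := by
  obtain ⟨_, g, q, hg, hq, hqw, hgq⟩ := m.factor_cof_trivFib f
  have := h q hq hqw
  have sq : CommSq g f q (𝟙 Y) := ⟨by simp [hgq]⟩
  exact m.cof_retract f g
    ⟨𝟙 X, 𝟙 X, sq.lift, q, by simp, sq.fac_right, by simp, by simp [hgq]⟩ hg

lemma cof_comp {X Y Z : M} {f : X ⟶ Y} {g : Y ⟶ Z} (hf : m.Cof f) (hg : m.Cof g) :
    m.Cof (f ≫ g) :=
  m.cof_of_hasLiftingProperty _ fun _ _ p hp hpw =>
    have := m.lift_cof_trivFib f p hf hp hpw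
    have := m.lift_cof_trivFib g p hg hp hpw
    inferInstance

lemma cof_of_isPushout {X Y Z W : M} {s : X ⟶ Z} {f : X ⟶ Y} {g : Z ⟶ W} {t : Y ⟶ W}
    (h : IsPushout s f g t) (hf : m.Cof f) : m.Cof g :=
  m.cof_of_hasLiftingProperty _ fun _ _ p hp hpw =>
    have := m.lift_cof_trivFib f p hf hp hpw
    h.hasLiftingProperty p

lemma cof_inl [HasInitial M] [HasBinaryCoproducts M] (A : M) {B : M} (hB : m.Cofibrant B) :
    m.Cof (coprod.inl : A ⟶ A ⨿ B) :=
  m.cof_of_isPushout (IsPushout.of_hasBinaryCoproduct' A B) hB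

lemma cof_inr [HasInitial M] [HasBinaryCoproducts M] {A : M} (B : M) (hA : m.Cofibrant A) :
    m.Cof (coprod.inr : B ⟶ A ⨿ B) :=
  m.cof_of_isPushout (IsPushout.of_hasBinaryCoproduct' A B).flip hA

/-- Ken Brown's lemma: factor `A ⨿ B ⟶ B` as a cofibration followed by a trivial fibration;
both inclusions of `A` and `B` are then trivial cofibrations. -/
lemma w_map_of_w_map_trivCof [HasInitial M] [HasBinaryCoproducts M]
    {N : Type*} [Category N] (mN : ModelStructure N) (Φ : M ⥤ N)
    (hΦ : ∀ ⦃A B : M⦄ (j : A ⟶ B), m.Cofibrant A → m.Cof j → m.W j → mN.W (Φ.map j))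
    {A B : M} (f : A ⟶ B) (hA : m.Cofibrant A) (hB : m.Cofibrant B) (hf : m.W f) :
    mN.W (Φ.map f) := by
  obtain ⟨_, c, q, hc, _, hqw, hcq⟩ := m.factor_cof_trivFib (coprod.desc f (𝟙 B))
  have huq : (coprod.inl ≫ c) ≫ q = f := by rw [Category.assoc, hcq, coprod.inl_desc]
  have hvq : (coprod.inr ≫ c) ≫ q = 𝟙 B := by rw [Category.assoc, hcq, coprod.inr_desc]
  have hu := hΦ (coprod.inl ≫ c) hA (m.cof_comp (m.cof_inl A hB) hc)
    (m.w_cancel_right _ q hqw (huq ▸ hf))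
  have hv := hΦ (coprod.inr ≫ c) hB (m.cof_comp (m.cof_inr B hA) hc)
    (m.w_cancel_right _ q hqw (hvq ▸ m.w_id B))
  have hq : mN.W (Φ.map q) := mN.w_cancel_left _ _ hv (by
    rw [← Φ.map_comp, hvq, Φ.map_id]; exact mN.w_id _)
  rw [← huq, Φ.map_comp]
  exact mN.w_comp _ _ hu hq

end ModelStructure

section Latching

variable {P : Type} [Preorder P] [HasColimitsOfSize.{0, 0} M]

lemma ι_latchingMap (D : P ⥤ M) {x y : P} (h : y < x) :
    colimit.ι (ObjectProperty.ι (fun y : P => y < x) ⋙ D) ⟨y, h⟩ ≫ latchingMap D x =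
      D.map (homOfLE h.le) :=
  colimit.ι_desc _ _

end Latching

section LatchingBot

variable {P : Type} [PartialOrder P] [OrderBot P] [HasColimitsOfSize.{0, 0} M]

noncomputable def isInitialLatchingObjBot (D : P ⥤ M) : IsInitial (latchingObj D ⊥) :=
  have : IsEmpty (ObjectProperty.FullSubcategory fun y : P => y < ⊥) :=
    ⟨fun y => not_lt_bot y.property⟩
  isColimitEquivIsInitialOfIsEmpty M _ (colimit.isColimit _)

/-- Below an atom `x` there is only `⊥`, which is therefore terminal in the indexing
category of the latching object. -/
lemma isIso_ι_latchingObj_of_isAtom (D : P ⥤ M) {x : P} (hx : IsAtom x) :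
    IsIso (colimit.ι (ObjectProperty.ι (fun y : P => y < x) ⋙ D) ⟨⊥, hx.bot_lt⟩) :=
  isIso_ι_of_isTerminal (IsTerminal.ofUniqueHom
    (fun y => ObjectProperty.homMk (homOfLE (hx.2 _ y.property).le))
    (fun _ _ => ObjectProperty.hom_ext _ (Subsingleton.elim _ _))) _

lemma ModelStructure.w_map_bot_of_isAtom (m : ModelStructure M) (D : P ⥤ M) {x : P}
    (hx : IsAtom x) (hW : m.W (latchingMap D x)) : m.W (D.map (homOfLE bot_le : ⊥ ⟶ x)) := by
  have := isIso_ι_latchingObj_of_isAtom D hx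
  rw [← ι_latchingMap D hx.bot_lt]
  exact m.w_comp _ _ (m.w_of_isIso _) hW

end LatchingBot

section Cube

variable {ι : Type} {Y Z : ι → M} (g : ∀ k, Y k ⟶ Z k)

lemma isIso_cubeEdge_true {k : ι} (b : Bool) (h : b ≤ true) (hg : b = false → IsIso (g k)) :
    IsIso (cubeEdge (i := k) g b true h) := by
  cases b
  · exact hg rfl
  · exact inferInstanceAs (IsIso (𝟙 _))

lemma isIso_cube_map_le_top (x : ι → Bool) (hg : ∀ k, x k = false → IsIso (g k)) :
    IsIso ((cube g).map (homOfLE le_top : x ⟶ ⊤)) :=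
  (isIso_pi_iff _).2 fun k => isIso_cubeEdge_true g (x k) _ (hg k)

end Cube

section Fill

variable {p : ℕ} (i : Fin p)

def fillFunctor (W' : {j : Fin p // j ≠ i} → M) : M ⥤ (Fin p → M) where
  obj := fillObj i W'
  map := fillHom i W'
  map_id A := by
    funext k
    by_cases hk : k = i <;> simp [fillHom, hk]
  map_comp φ ψ := by
    funext k
    by_cases hk : k = i <;> simp [fillHom, hk]

lemma ModelStructure.cofibrant_fillObj [HasInitial M] {m : ModelStructure M}
    {W' : {j : Fin p // j ≠ i} → M} (hW' : ∀ s, m.Cofibrant (W' s)) {A : M}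
    (hA : m.Cofibrant A) (k : Fin p) : m.Cofibrant (fillObj i W' A k) := by
  dsimp only [fillObj]
  split_ifs
  exacts [hA, hW' _]

end Fill

namespace IsCofibrantFunctor

variable [HasColimitsOfSize.{0, 0} M] [HasInitial M] {m : ModelStructure M} {ι : Type}
  {F : (ι → M) ⥤ M}

lemma cofibrant_obj (hF : IsCofibrantFunctor m m F) {X : ι → M}
    (hX : ∀ k, m.Cofibrant (X k)) : m.Cofibrant (F.obj X) := by
  have hL := (hF X X (fun k => 𝟙 (X k)) hX (fun k => m.cof_id _) ∅ (by simp)).1 ⊥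
  have hfac : initial.to (F.obj X) =
      (initialIsInitial.uniqueUpToIso (isInitialLatchingObjBot _)).hom ≫
        latchingMap (cube (fun k => 𝟙 (X k)) ⋙ F) ⊥ :=
    initial.hom_ext _ _
  rw [ModelStructure.Cofibrant, hfac]
  exact m.cof_comp (m.cof_of_isIso _) hL

/-- `g` factors through the vertex `update ⊥ i true` of its cube: the first factor is the
latching map there up to isomorphism, and the second one is invertible. -/
lemma w_map_of_trivCof_of_isIso [DecidableEq ι] (hF : IsCofibrantFunctor m m F)
    {Y Z : ι → M} (g : ∀ k, Y k ⟶ Z k) (hY : ∀ k, m.Cofibrant (Y k)) (i : ι)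
    (hcof : m.Cof (g i)) (hw : m.W (g i)) (hiso : ∀ k ≠ i, IsIso (g k)) :
    m.W (F.map g) := by
  have hg : ∀ k, m.Cof (g k) := fun k => by
    by_cases hk : k = i
    · exact hk ▸ hcof
    · have := hiso k hk
      exact m.cof_of_isIso _
  set x : ι → Bool := Function.update ⊥ i true
  have hx : IsAtom x := Pi.isAtom_single isAtom_top
  have hlat := ((hF Y Z g hY hg {i} (by simpa)).2 x ⟨i, rfl, by simp [x]⟩).2
  have hiso' := isIso_cube_map_le_top g x fun k hk => hiso k (by rintro rfl; simp [x] at hk)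
  have hfac : F.map g = (cube g ⋙ F).map (homOfLE bot_le : ⊥ ⟶ x) ≫
      F.map ((cube g).map (homOfLE le_top : x ⟶ ⊤)) := by
    rw [Functor.comp_map, ← F.map_comp, ← Functor.map_comp]
    rfl
  have h₁ := m.w_map_bot_of_isAtom (cube g ⋙ F) hx hlat
  have h₂ := m.w_of_isIso (F.map ((cube g).map (homOfLE le_top : x ⟶ ⊤)))
  rw [hfac]
  exact m.w_comp _ _ h₁ h₂

lemma w_map_fillHom_of_trivCof {p : ℕ} {F : (Fin p → M) ⥤ M} (hF : IsCofibrantFunctor m m F)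
    (i : Fin p) {W' : {j : Fin p // j ≠ i} → M} (hW' : ∀ s, m.Cofibrant (W' s))
    {A B : M} (j : A ⟶ B) (hA : m.Cofibrant A) (hj : m.Cof j) (hjw : m.W j) :
    m.W (F.map (fillHom i W' j)) := by
  refine hF.w_map_of_trivCof_of_isIso _ (m.cofibrant_fillObj i hW' hA) i ?_ ?_ fun k hk => ?_
  · rw [fillHom, dif_pos rfl]
    exact m.cof_comp (m.cof_of_isIso _) (m.cof_comp hj (m.cof_of_isIso _))
  · rw [fillHom, dif_pos rfl]
    exact m.w_comp _ _ (m.w_of_isIso _) (m.w_comp _ _ hjw (m.w_of_isIso _))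
  · rw [fillHom, dif_neg hk]
    infer_instance

end IsCofibrantFunctor

theorem statement7_general [HasColimits M] (m : ModelStructure M)
    {p q : ℕ} (i : Fin p)
    (F G : (Fin p → M) ⥤ M) (F' G' : (Fin q → M) ⥤ M)
    (hF : IsCofibrantFunctor m m F)
    (hF' : IsCofibrantFunctor m m F') (hG' : IsCofibrantFunctor m m G')
    (τ : F ⟶ G) (τ' : F' ⟶ G')
    (hτ : ∀ X : Fin p → M, (∀ j, m.Cofibrant (X j)) → m.W (τ.app X))
    (hτ' : ∀ X : Fin q → M, (∀ k, m.Cofibrant (X k)) → m.W (τ'.app X)) :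
    ∀ X : ({j : Fin p // j ≠ i} ⊕ Fin q) → M, (∀ a, m.Cofibrant (X a)) →
      m.W (F.map (fillHom i (fun s => X (Sum.inl s)) (τ'.app fun k => X (Sum.inr k))) ≫
        τ.app (fillObj i (fun s => X (Sum.inl s)) (G'.obj fun k => X (Sum.inr k)))) := by
  intro X hX
  have hF'X := hF'.cofibrant_obj fun k => hX (Sum.inr k)
  have hG'X := hG'.cofibrant_obj fun k => hX (Sum.inr k)
  have hτ'X := hτ' _ fun k => hX (Sum.inr k)
  refine m.w_comp _ _ ?_ (hτ _ (m.cofibrant_fillObj i (fun s => hX _) hG'X))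
  exact m.w_map_of_w_map_trivCof m (fillFunctor i _ ⋙ F)
    (fun _ _ j hA hj hjw => hF.w_map_fillHom_of_trivCof i (fun s => hX _) j hA hj hjw)
    _ hF'X hG'X hτ'X

/-- Inserting an objectwise (on cofibrant tuples) weak equivalence
`τ' : F' ⟶ G'` into the `i`-th slot of an objectwise (on cofibrant tuples) weak
equivalence `τ : F ⟶ G` of cofibrant functors yields a weak equivalence on every
tuple of cofibrant objects. -/
theorem statement7 [HasLimits M] [HasColimits M] (m : ModelStructure M)
    {p q : ℕ} (i : Fin p)
    (F G : (Fin p → M) ⥤ M) (F' G' : (Fin q → M) ⥤ M)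
    (hF : IsCofibrantFunctor m m F) (hG : IsCofibrantFunctor m m G)
    (hF' : IsCofibrantFunctor m m F') (hG' : IsCofibrantFunctor m m G')
    (τ : F ⟶ G) (τ' : F' ⟶ G')
    (hτ : ∀ X : Fin p → M, (∀ j, m.Cofibrant (X j)) → m.W (τ.app X))
    (hτ' : ∀ X : Fin q → M, (∀ k, m.Cofibrant (X k)) → m.W (τ'.app X)) :
    ∀ X : ({j : Fin p // j ≠ i} ⊕ Fin q) → M, (∀ a, m.Cofibrant (X a)) →
      m.W (F.map (fillHom i (fun s => X (Sum.inl s)) (τ'.app fun k => X (Sum.inr k))) ≫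
        τ.app (fillObj i (fun s => X (Sum.inl s)) (G'.obj fun k => X (Sum.inr k)))) :=
  statement7_general m i F G F' G' hF hF' hG' τ τ' hτ hτ'
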